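/- arXiv:1402.4084 — 3 statements merged into one kernel-verified Lean document; each statement's English description precedes it below -/
import Mathlib

section
/- (Lemma 1.) For every t ≥ 1 and every u_t ∈ ℝ^d, the infimum over (u_1, …, u_{t−1}) ∈ (ℝ^d)^{t−1} of Q_t(u_1, …, u_t) is attained and equals u_tᵀ D_t u_t − 2 u_tᵀ e_t + f_t, where D_t, e_t, f_t are given by the recurrences D_1 = b I + x_1 x_1ᵀ, D_t = (D_{t−1}^{−1} + c^{−1} I)^{−1} + x_t x_tᵀ; e_1 = y_1 x_1, e_t = (I + c^{−1} D_{t−1})^{−1} e_{t−1} + y_t x_t; f_1 = y_1², f_t = f_{t−1} − e_{t−1}ᵀ (c I + D_{t−1})^{−1} e_{t−1} + y_t². Moreover D_t is positive definite for every t. -/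
/-!
Dynamic programming in `t`: since
`Q_{t+1} = Q_t + c‖u_{t+1} - u_t‖² + (y_{t+1} - u_{t+1}ᵀ x_{t+1})²`, minimizing over
`u_1, …, u_{t-1}` first and then over `u_t` reduces, by induction, to minimizing
`v ↦ vᵀ (cI + D_t) v - 2 vᵀ g` plus a constant, where `g = e_t + c u_{t+1}`. Completing the
square gives the minimum `-gᵀ (cI + D_t)⁻¹ g`, and the identities `(D⁻¹ + c⁻¹ I)⁻¹ = cI - c² (cI + D)⁻¹` and
`(I + c⁻¹ D)⁻¹ = c (cI + D)⁻¹` turn it into the recurrences for `D`, `e` and `f`. Positive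
definiteness of `D_t` propagates because inverses and sums of positive definite matrices are
positive definite.
-/

set_option autoImplicit false

open Matrix Finset

noncomputable section

/-- `D_1 = b I + x_1 x_1ᵀ`, `D_t = (D_{t-1}⁻¹ + c⁻¹ I)⁻¹ + x_t x_tᵀ` for `t ≥ 2`. -/
def lasecD (d : ℕ) (b c : ℝ) (x : ℕ → Fin d → ℝ) : ℕ → Matrix (Fin d) (Fin d) ℝ
  | 0 => 1  -- unused
  | 1 => b • (1 : Matrix (Fin d) (Fin d) ℝ) + vecMulVec (x 1) (x 1)
  | t + 2 => ((lasecD d b c x (t + 1))⁻¹ + c⁻¹ • (1 : Matrix (Fin d) (Fin d) ℝ))⁻¹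
      + vecMulVec (x (t + 2)) (x (t + 2))

/-- `e_1 = y_1 x_1`, `e_t = (I + c⁻¹ D_{t-1})⁻¹ e_{t-1} + y_t x_t` for `t ≥ 2`. -/
def lasecE (d : ℕ) (b c : ℝ) (x : ℕ → Fin d → ℝ) (y : ℕ → ℝ) : ℕ → (Fin d → ℝ)
  | 0 => 0  -- unused
  | 1 => y 1 • x 1
  | t + 2 => ((1 : Matrix (Fin d) (Fin d) ℝ) + c⁻¹ • lasecD d b c x (t + 1))⁻¹ *ᵥ
        lasecE d b c x y (t + 1) + y (t + 2) • x (t + 2)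

/-- `f_1 = y_1²`, `f_t = f_{t-1} - e_{t-1}ᵀ (c I + D_{t-1})⁻¹ e_{t-1} + y_t²` for `t ≥ 2`. -/
def lasecF (d : ℕ) (b c : ℝ) (x : ℕ → Fin d → ℝ) (y : ℕ → ℝ) : ℕ → ℝ
  | 0 => 0  -- unused
  | 1 => (y 1) ^ 2
  | t + 2 => lasecF d b c x y (t + 1)
      - lasecE d b c x y (t + 1) ⬝ᵥ
          ((c • (1 : Matrix (Fin d) (Fin d) ℝ) + lasecD d b c x (t + 1))⁻¹ *ᵥ
            lasecE d b c x y (t + 1))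
      + (y (t + 2)) ^ 2

/-- `Q_t(u_1,…,u_t) = b‖u_1‖² + c Σ_{s=1}^{t-1} ‖u_{s+1}-u_s‖² + Σ_{s=1}^{t} (y_s - u_sᵀx_s)²`. -/
def lasecQ (d : ℕ) (b c : ℝ) (x : ℕ → Fin d → ℝ) (y : ℕ → ℝ) (t : ℕ)
    (u : ℕ → Fin d → ℝ) : ℝ :=
  b * (∑ i, (u 1 i) ^ 2) + c * ∑ s ∈ Icc 1 (t - 1), ∑ i, (u (s + 1) i - u s i) ^ 2
    + ∑ s ∈ Icc 1 t, (y s - u s ⬝ᵥ x s) ^ 2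

namespace Matrix

variable {n : Type*} [Fintype n]

section Field

variable [DecidableEq n] {K : Type*} [Field K] {c : K} {D : Matrix n n K}

theorem inv_one_add_inv_smul (hc : c ≠ 0) (hA : IsUnit (c • 1 + D).det) :
    (1 + c⁻¹ • D)⁻¹ = c • (c • 1 + D)⁻¹ := by
  apply inv_eq_right_inv
  rw [mul_smul_comm, ← smul_mul_assoc, smul_add, smul_smul, mul_inv_cancel₀ hc, one_smul,
    mul_nonsing_inv _ hA]

theorem inv_inv_add_inv_smul_one (hc : c ≠ 0) (hD : IsUnit D.det) (hA : IsUnit (c • 1 + D).det) :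
    (D⁻¹ + c⁻¹ • 1)⁻¹ = c • 1 - c ^ 2 • (c • 1 + D)⁻¹ := by
  apply inv_eq_right_inv
  have key : c ^ 2 • (D⁻¹ * (c • 1 + D)⁻¹) + c • (c • 1 + D)⁻¹ = c • D⁻¹ := by
    calc c ^ 2 • (D⁻¹ * (c • 1 + D)⁻¹) + c • (c • 1 + D)⁻¹
        = c • (D⁻¹ * (c • 1 + D) * (c • 1 + D)⁻¹) := by
          rw [Matrix.mul_add, nonsing_inv_mul _ hD, mul_smul_comm, Matrix.mul_one,
            Matrix.add_mul, smul_mul_assoc, smul_add, smul_smul, Matrix.one_mul, sq]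
      _ = c • D⁻¹ := by rw [Matrix.mul_assoc, mul_nonsing_inv _ hA, Matrix.mul_one]
  calc (D⁻¹ + c⁻¹ • 1) * (c • 1 - c ^ 2 • (c • 1 + D)⁻¹)
      = c • D⁻¹ + 1 - (c ^ 2 • (D⁻¹ * (c • 1 + D)⁻¹) + c • (c • 1 + D)⁻¹) := by
        simp only [mul_sub, Matrix.add_mul, smul_mul_assoc, mul_smul_comm, Matrix.one_mul,
          Matrix.mul_one]
        match_scalars <;> field_simp
    _ = 1 := by rw [key, add_sub_cancel_left]

end Field

section CommRing

variable {R : Type*} [CommRing R] {A : Matrix n n R}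

theorem IsSymm.dotProduct_mulVec_comm (hA : A.IsSymm) (v w : n → R) :
    v ⬝ᵥ A *ᵥ w = w ⬝ᵥ A *ᵥ v := by
  conv_lhs => rw [← hA.eq]
  exact dotProduct_transpose_mulVec A v w

theorem IsSymm.dotProduct_mulVec_sub_two_mul_dotProduct [DecidableEq n] (hA : A.IsSymm)
    (hdet : IsUnit A.det) (g v : n → R) :
    v ⬝ᵥ A *ᵥ v - 2 * (v ⬝ᵥ g)
      = (v - A⁻¹ *ᵥ g) ⬝ᵥ A *ᵥ (v - A⁻¹ *ᵥ g) - g ⬝ᵥ A⁻¹ *ᵥ g := by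
  have hAg : A *ᵥ A⁻¹ *ᵥ g = g := by rw [mulVec_mulVec, mul_nonsing_inv _ hdet, one_mulVec]
  rw [mulVec_sub, hAg, dotProduct_sub, sub_dotProduct, sub_dotProduct,
    hA.dotProduct_mulVec_comm (A⁻¹ *ᵥ g) v, hAg, dotProduct_comm (A⁻¹ *ᵥ g) g]
  ring

end CommRing

theorem PosDef.isLeast_range_dotProduct_mulVec_sub [DecidableEq n] {A : Matrix n n ℝ}
    (hA : A.PosDef) (g : n → ℝ) :
    IsLeast (Set.range fun v => v ⬝ᵥ A *ᵥ v - 2 * (v ⬝ᵥ g)) (-(g ⬝ᵥ A⁻¹ *ᵥ g)) := by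
  have hsymm : A.IsSymm := isHermitian_iff_isSymm.mp hA.isHermitian
  have hdet : IsUnit A.det := (isUnit_iff_isUnit_det A).mp hA.isUnit
  simp only [hsymm.dotProduct_mulVec_sub_two_mul_dotProduct hdet g]
  refine ⟨⟨A⁻¹ *ᵥ g, by simp⟩, ?_⟩
  rintro _ ⟨v, rfl⟩
  simpa using hA.posSemidef.dotProduct_mulVec_nonneg (v - A⁻¹ *ᵥ g)

end Matrix

section Lasec

variable {d : ℕ} {b c : ℝ} {x : ℕ → Fin d → ℝ} {y : ℕ → ℝ}

theorem lasecD_succ_posDef (hb : 0 < b) (hc : 0 < c) (k : ℕ) :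
    (lasecD d b c x (k + 1)).PosDef := by
  have hxx (t : ℕ) : (vecMulVec (x t) (x t)).PosSemidef := by
    simpa using posSemidef_vecMulVec_self_star (x t)
  induction k with
  | zero => exact (PosDef.one.smul hb).add_posSemidef (hxx 1)
  | succ k ih =>
    exact (ih.inv.add (PosDef.one.smul (inv_pos.mpr hc))).inv.add_posSemidef (hxx _)

variable (d b c x y) in
def lasecV (t : ℕ) (w : Fin d → ℝ) : ℝ :=
  w ⬝ᵥ (lasecD d b c x t *ᵥ w) - 2 * (w ⬝ᵥ lasecE d b c x y t) + lasecF d b c x y t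

theorem lasecQ_one (u : ℕ → Fin d → ℝ) : lasecQ d b c x y 1 u = lasecV d b c x y 1 (u 1) := by
  have hsq : ∑ i, u 1 i ^ 2 = u 1 ⬝ᵥ u 1 := by simp [dotProduct, sq]
  simp only [lasecQ, lasecV, lasecD, lasecE, lasecF, Nat.sub_self, Icc_self, sum_singleton,
    Icc_eq_empty_of_lt Nat.zero_lt_one, sum_empty, add_mulVec, smul_mulVec, one_mulVec,
    vecMulVec_mulVec, op_smul_eq_smul, dotProduct_add, dotProduct_smul, smul_eq_mul, hsq,
    dotProduct_comm (x 1) (u 1)]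
  ring

theorem lasecQ_add_two (k : ℕ) (u : ℕ → Fin d → ℝ) :
    lasecQ d b c x y (k + 2) u = lasecQ d b c x y (k + 1) u
      + c * ((u (k + 2) - u (k + 1)) ⬝ᵥ (u (k + 2) - u (k + 1)))
      + (y (k + 2) - u (k + 2) ⬝ᵥ x (k + 2)) ^ 2 := by
  have hsq (v : Fin d → ℝ) : v ⬝ᵥ v = ∑ i, v i ^ 2 := by simp [dotProduct, sq]
  simp only [lasecQ, hsq, Pi.sub_apply, show k + 2 - 1 = k + 1 from rfl, Nat.add_sub_cancel]
  rw [sum_Icc_succ_top (by omega : 1 ≤ k + 1), sum_Icc_succ_top (by omega : 1 ≤ k + 1 + 1)]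
  ring

theorem lasecQ_update_of_lt {t s : ℕ} (ht : 1 ≤ t) (hts : t < s) (u : ℕ → Fin d → ℝ)
    (w : Fin d → ℝ) : lasecQ d b c x y t (Function.update u s w) = lasecQ d b c x y t u := by
  have hu {r : ℕ} (hr : r ≤ t) : Function.update u s w r = u r :=
    Function.update_of_ne (by omega) _ _
  unfold lasecQ
  rw [hu ht]
  congr 1
  · congr 2
    refine sum_congr rfl fun r hr => ?_
    have := (mem_Icc.mp hr).2
    rw [hu (by omega), hu (by omega)]
  · exact sum_congr rfl fun r hr => by rw [hu (mem_Icc.mp hr).2]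

theorem isLeast_lasecV_add_two (hb : 0 < b) (hc : 0 < c) (k : ℕ) (w : Fin d → ℝ) :
    IsLeast (Set.range fun v => lasecV d b c x y (k + 1) v + c * ((w - v) ⬝ᵥ (w - v))
        + (y (k + 2) - w ⬝ᵥ x (k + 2)) ^ 2)
      (lasecV d b c x y (k + 2) w) := by
  set D := lasecD d b c x (k + 1) with hD_def
  set e := lasecE d b c x y (k + 1)
  set f := lasecF d b c x y (k + 1)
  set A := c • (1 : Matrix (Fin d) (Fin d) ℝ) + D
  set g := e + c • w
  set C := f + c * (w ⬝ᵥ w) + (y (k + 2) - w ⬝ᵥ x (k + 2)) ^ 2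
  have hD : D.PosDef := lasecD_succ_posDef hb hc k
  have hA : A.PosDef := (PosDef.one.smul hc).add hD
  have hDdet : IsUnit D.det := (isUnit_iff_isUnit_det D).mp hD.isUnit
  have hAdet : IsUnit A.det := (isUnit_iff_isUnit_det A).mp hA.isUnit
  have hsplit : (fun v => lasecV d b c x y (k + 1) v + c * ((w - v) ⬝ᵥ (w - v))
      + (y (k + 2) - w ⬝ᵥ x (k + 2)) ^ 2) = (· + C) ∘ fun v => v ⬝ᵥ A *ᵥ v - 2 * (v ⬝ᵥ g) := by
    funext v
    simp only [Function.comp_apply, lasecV, A, g, C, add_mulVec, smul_mulVec, one_mulVec,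
      dotProduct_add, dotProduct_smul, smul_eq_mul, dotProduct_sub, sub_dotProduct,
      dotProduct_comm w v]
    ring
  have hvalue : -(g ⬝ᵥ A⁻¹ *ᵥ g) + C = lasecV d b c x y (k + 2) w := by
    have hsymm : A⁻¹.IsSymm := isHermitian_iff_isSymm.mp hA.inv.isHermitian
    simp only [lasecV, lasecD, lasecE, lasecF, ← hD_def,
      inv_inv_add_inv_smul_one hc.ne' hDdet hAdet, inv_one_add_inv_smul hc.ne' hAdet]
    simp only [g, C, add_mulVec, sub_mulVec, smul_mulVec, one_mulVec, vecMulVec_mulVec,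
      op_smul_eq_smul, mulVec_add, mulVec_smul, dotProduct_add, add_dotProduct, dotProduct_sub,
      dotProduct_smul, smul_dotProduct, smul_eq_mul, hsymm.dotProduct_mulVec_comm e w,
      dotProduct_comm (x (k + 2)) w]
    ring
  rw [hsplit, Set.range_comp, ← hvalue]
  exact (monotone_id.add_const C).map_isLeast (hA.isLeast_range_dotProduct_mulVec_sub g)

theorem isLeast_lasecQ (hb : 0 < b) (hc : 0 < c) (k : ℕ) (w : Fin d → ℝ) :
    IsLeast {r | ∃ u, u (k + 1) = w ∧ r = lasecQ d b c x y (k + 1) u}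
      (lasecV d b c x y (k + 1) w) := by
  induction k generalizing w with
  | zero =>
    rw [zero_add]
    refine ⟨⟨fun _ => w, rfl, (lasecQ_one fun _ => w).symm⟩, ?_⟩
    rintro _ ⟨u, rfl, rfl⟩
    exact (lasecQ_one u).ge
  | succ k ih =>
    obtain ⟨⟨v, hv⟩, hlow⟩ := isLeast_lasecV_add_two (x := x) (y := y) hb hc k w
    constructor
    · obtain ⟨u, hu, hQ⟩ := (ih v).1
      refine ⟨Function.update u (k + 2) w, Function.update_self .., ?_⟩
      rw [lasecQ_add_two, lasecQ_update_of_lt (by omega) (by omega), Function.update_self,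
        Function.update_of_ne (by omega), hu, ← hQ, ← hv]
    · rintro _ ⟨u, rfl, rfl⟩
      rw [lasecQ_add_two]
      calc lasecV d b c x y (k + 2) (u (k + 2))
          ≤ lasecV d b c x y (k + 1) (u (k + 1))
            + c * ((u (k + 2) - u (k + 1)) ⬝ᵥ (u (k + 2) - u (k + 1)))
            + (y (k + 2) - u (k + 2) ⬝ᵥ x (k + 2)) ^ 2 := hlow ⟨u (k + 1), rfl⟩
        _ ≤ _ := by gcongr; exact (ih _).2 ⟨u, rfl, rfl⟩

end Lasec

theorem lasec_lemma1_general (d : ℕ) (b c : ℝ) (hb : 0 < b) (hbc : b < c)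
    (x : ℕ → Fin d → ℝ) (y : ℕ → ℝ) :
    (∀ t : ℕ, 1 ≤ t → ∀ ut : Fin d → ℝ,
      IsLeast {r : ℝ | ∃ u : ℕ → Fin d → ℝ, u t = ut ∧ r = lasecQ d b c x y t u}
        (ut ⬝ᵥ (lasecD d b c x t *ᵥ ut) - 2 * (ut ⬝ᵥ lasecE d b c x y t)
          + lasecF d b c x y t)) ∧
    (∀ t : ℕ, 1 ≤ t → (lasecD d b c x t).PosDef) := by
  have hc : 0 < c := hb.trans hbc
  constructor
  · intro t ht ut
    obtain ⟨k, rfl⟩ := Nat.exists_eq_add_of_le' ht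
    exact isLeast_lasecQ hb hc k ut
  · intro t ht
    obtain ⟨k, rfl⟩ := Nat.exists_eq_add_of_le' ht
    exact lasecD_succ_posDef hb hc k

/-- Lemma 1: for every `t ≥ 1` and every `u_t`, the infimum of
`Q_t(u_1,…,u_t)` over `u_1,…,u_{t-1}` is attained and equals
`u_tᵀ D_t u_t - 2 u_tᵀ e_t + f_t`; moreover every `D_t` (`t ≥ 1`) is positive definite. -/
theorem lasec_lemma1 (d : ℕ) (hd : 1 ≤ d) (b c : ℝ) (hb : 0 < b) (hbc : b < c)
    (x : ℕ → Fin d → ℝ) (y : ℕ → ℝ) :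
    (∀ t : ℕ, 1 ≤ t → ∀ ut : Fin d → ℝ,
      IsLeast {r : ℝ | ∃ u : ℕ → Fin d → ℝ, u t = ut ∧ r = lasecQ d b c x y t u}
        (ut ⬝ᵥ (lasecD d b c x t *ᵥ ut) - 2 * (ut ⬝ᵥ lasecE d b c x y t)
          + lasecF d b c x y t)) ∧
    (∀ t : ℕ, 1 ≤ t → (lasecD d b c x t).PosDef) :=
  lasec_lemma1_general d b c hb hbc x y

end
end

section
/- For every r ≥ 0 and q ∈ ℝ, the choice ŷ = sign(q) ∈ {−1, +1} (taking sign(0) = 1, i.e., any ŷ ∈ {−1,+1} with q·ŷ = |q|) minimizes over ŷ ∈ {−1, +1} the quantity max over y ∈ {−1, +1} of [r y² + 2 y (q − ŷ) + ŷ²]. Moreover, for each fixed ŷ ∈ {−1, +1}, this inner maximum equals r + 2|q − ŷ| + 1. -/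
set_option autoImplicit false

private lemma max_key (r q a : ℝ) :
    max (r * (-1 : ℝ) ^ 2 + 2 * (-1 : ℝ) * (q - a) + a ^ 2)
        (r * (1 : ℝ) ^ 2 + 2 * (1 : ℝ) * (q - a) + a ^ 2)
      = r + 2 * |q - a| + a ^ 2 := by
  rcases abs_cases (q - a) with ⟨h1, h2⟩ | ⟨h1, h2⟩ <;> rw [h1]
  · rw [max_eq_right (by linarith)]; ring
  · rw [max_eq_left (by linarith)]; ring

/-- for `r ≥ 0` and `q ∈ ℝ`, the choice `ŷ = sign(q) ∈ {-1,+1}`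
(with `sign(q) = 1` iff `q ≥ 0`) minimizes over `ŷ ∈ {-1,+1}` the quantity
`max_{y ∈ {-1,+1}} [r y² + 2 y (q - ŷ) + ŷ²]`; moreover for each fixed
`ŷ ∈ {-1,+1}` this inner maximum equals `r + 2|q - ŷ| + 1`. -/
theorem minmax_sign (r q : ℝ) (hr : 0 ≤ r) :
    (∀ yhat : ℝ, yhat = -1 ∨ yhat = 1 →
        max (r * (-1 : ℝ) ^ 2 + 2 * (-1 : ℝ) * (q - yhat) + yhat ^ 2)
            (r * (1 : ℝ) ^ 2 + 2 * (1 : ℝ) * (q - yhat) + yhat ^ 2)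
          = r + 2 * |q - yhat| + 1) ∧
    (∀ yhat : ℝ, yhat = -1 ∨ yhat = 1 →
        max (r * (-1 : ℝ) ^ 2 + 2 * (-1 : ℝ) * (q - (if 0 ≤ q then (1 : ℝ) else -1))
              + (if 0 ≤ q then (1 : ℝ) else -1) ^ 2)
            (r * (1 : ℝ) ^ 2 + 2 * (1 : ℝ) * (q - (if 0 ≤ q then (1 : ℝ) else -1))
              + (if 0 ≤ q then (1 : ℝ) else -1) ^ 2)
          ≤ max (r * (-1 : ℝ) ^ 2 + 2 * (-1 : ℝ) * (q - yhat) + yhat ^ 2)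
              (r * (1 : ℝ) ^ 2 + 2 * (1 : ℝ) * (q - yhat) + yhat ^ 2)) := by
  constructor
  · intro yhat hy
    rw [max_key]
    rcases hy with h | h <;> rw [h] <;> ring
  · intro yhat hy
    rw [max_key, max_key]
    have hs : (if 0 ≤ q then (1 : ℝ) else -1) ^ 2 = 1 := by
      split <;> norm_num
    rw [hs]
    rcases hy with h | h <;> rw [h] <;> split_ifs with hq <;>
      rcases abs_cases (q - 1) with ⟨h1, h2⟩ | ⟨h1, h2⟩ <;>
      rcases abs_cases (q - -1) with ⟨h3, h4⟩ | ⟨h3, h4⟩ <;>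
      simp only [h1, h3] <;> norm_num <;> linarith
end

section
/- (Lemma 3.) Let A, B, C, D, γ, m be positive reals satisfying m ≤ (1/γ) D + (1/γ) √(A (B + m C)). Then m ≤ (1/γ) D + (1/(2γ²)) A C + (1/γ) √( (1/γ) D A C + (1/(4γ²)) (A C)² + A B ). -/
set_option autoImplicit false

/-- Lemma 3: if `A,B,C,D,γ,m > 0` satisfy
`m ≤ (1/γ)D + (1/γ)√(A(B + mC))`, then
`m ≤ (1/γ)D + (1/(2γ²))AC + (1/γ)√((1/γ)DAC + (1/(4γ²))(AC)² + AB)`. -/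
theorem quad_ineq_lemma (A B C D γ m : ℝ)
    (hA : 0 < A) (hB : 0 < B) (hC : 0 < C) (hD : 0 < D) (hγ : 0 < γ) (hm : 0 < m)
    (h : m ≤ (1 / γ) * D + (1 / γ) * Real.sqrt (A * (B + m * C))) :
    m ≤ (1 / γ) * D + (1 / (2 * γ ^ 2)) * (A * C)
      + (1 / γ) * Real.sqrt
          ((1 / γ) * D * A * C + (1 / (4 * γ ^ 2)) * (A * C) ^ 2 + A * B) := by
  have hγ2 : (0:ℝ) < γ ^ 2 := by positivity
  set E : ℝ := (1 / γ) * D * A * C + (1 / (4 * γ ^ 2)) * (A * C) ^ 2 + A * B with hE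
  have hEnn : 0 ≤ E := by positivity
  have hsE : 0 ≤ Real.sqrt E := Real.sqrt_nonneg E
  rcases le_or_gt (γ * m) D with hcase | hcase
  · have h1 : m ≤ (1 / γ) * D := by rw [div_mul_eq_mul_div, le_div_iff₀ hγ]; linarith
    have h2 : 0 ≤ (1 / (2 * γ ^ 2)) * (A * C) := by positivity
    have h3 : 0 ≤ (1 / γ) * Real.sqrt E := by positivity
    linarith
  · -- squaring step
    have hABC : (0:ℝ) ≤ A * (B + m * C) := by positivity
    have hγne : γ ≠ 0 := ne_of_gt hγ
    have h' : γ * m - D ≤ Real.sqrt (A * (B + m * C)) := by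
      have hh : γ * m ≤ γ * ((1 / γ) * D + (1 / γ) * Real.sqrt (A * (B + m * C))) :=
        mul_le_mul_of_nonneg_left h (le_of_lt hγ)
      rw [mul_add, ← mul_assoc, ← mul_assoc, mul_one_div_cancel hγne, one_mul, one_mul] at hh
      linarith
    have hsq : (γ * m - D) ^ 2 ≤ A * (B + m * C) := by
      have hmD : 0 ≤ γ * m - D := by linarith
      nlinarith [Real.sq_sqrt hABC, h']
    -- quadratic: γ²u² ≤ E where u = m - D/γ - AC/(2γ²)
    set u : ℝ := m - ((1 / γ) * D + (1 / (2 * γ ^ 2)) * (A * C)) with hu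
    have key : (γ * u) ^ 2 ≤ E := by
      have hv : γ * u = (γ * m - D) - A * C / (2 * γ) := by
        rw [hu]; field_simp; ring
      have hEv : E = 2 * D * (A * C / (2 * γ)) + (A * C / (2 * γ)) ^ 2 + A * B := by
        rw [hE]; field_simp; ring
      have hw : A * C / (2 * γ) * (2 * γ) = A * C := by field_simp
      rw [hv, hEv]
      nlinarith [hsq, hw]
    have h2 : γ * u ≤ Real.sqrt E := by
      calc γ * u ≤ |γ * u| := le_abs_self _
        _ = Real.sqrt ((γ * u) ^ 2) := (Real.sqrt_sq_eq_abs _).symm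
        _ ≤ Real.sqrt E := Real.sqrt_le_sqrt key
    have : u ≤ (1 / γ) * Real.sqrt E := by
      rw [one_div, inv_mul_eq_div, le_div_iff₀ hγ]
      linarith [h2, mul_comm u γ]
    simp only [hu] at this
    linarith
end
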